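/- arXiv:2106.13949 — 3 statements merged into one kernel-verified Lean document; each statement's English description precedes it below -/
import Mathlib

section
/- Let A be a bounded linear operator on a complex Hilbert space H. Then w(A)² ≥ (1/4)‖A*A + AA*‖ + (1/4) | ‖Re(A) + Im(A)‖² − ‖Re(A) − Im(A)‖² |. -/
open ContinuousLinearMap Complex

variable {H : Type*} [NormedAddCommGroup H] [InnerProductSpace ℂ H] [CompleteSpace H]

noncomputable def nrad (A : H →L[ℂ] H) : ℝ :=
  ⨆ x : {x : H // ‖x‖ = 1}, ‖(inner ℂ (A x) (x : H) : ℂ)‖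

noncomputable def reP (A : H →L[ℂ] H) : H →L[ℂ] H := (2 : ℂ)⁻¹ • (A + adjoint A)
noncomputable def imP (A : H →L[ℂ] H) : H →L[ℂ] H := (2 * Complex.I)⁻¹ • (A - adjoint A)

noncomputable def oabs (A : H →L[ℂ] H) : H →L[ℂ] H := cfc Real.sqrt (adjoint A * A)

noncomputable def opow (T : H →L[ℂ] H) (r : ℝ) : H →L[ℂ] H := cfc (fun t : ℝ => t ^ r) T

/-! With `B = Re A + Im A` and `C = Re A - Im A` one has `B² + C² = A*A + AA*`, so
`‖A*A + AA*‖ ≤ ‖B‖² + ‖C‖²`. Moreover `B = Re ((1 - i) A)` and `C = Re ((1 + i) A)`, and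
`‖Re T‖ ≤ w(T)` because `Re T` is self-adjoint with `⟨Re T x, x⟩ = Re ⟨T x, x⟩`; since `|1 ± i|² = 2`
this gives `‖B‖², ‖C‖² ≤ 2 w(A)²`. The right-hand side is at most
`(‖B‖² + ‖C‖² + |‖B‖² - ‖C‖²|) / 4 = max (‖B‖², ‖C‖²) / 2 ≤ w(A)²`. -/

local notation "⟪" x ", " y "⟫" => inner ℂ x y

omit [CompleteSpace H] in
lemma bddAbove_norm_inner_self (T : H →L[ℂ] H) :
    BddAbove (Set.range fun x : {x : H // ‖x‖ = 1} => ‖⟪T x, (x : H)⟫‖) := by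
  refine ⟨‖T‖, ?_⟩
  rintro _ ⟨x, rfl⟩
  calc ‖⟪T x, (x : H)⟫‖ ≤ ‖T x‖ * ‖(x : H)‖ := norm_inner_le_norm _ _
    _ ≤ ‖T‖ := by simpa [x.2] using T.le_opNorm x

omit [CompleteSpace H] in
lemma norm_inner_self_le_nrad_mul_sq (T : H →L[ℂ] H) (x : H) :
    ‖⟪T x, x⟫‖ ≤ nrad T * ‖x‖ ^ 2 := by
  obtain rfl | hx := eq_or_ne x 0
  · simp
  set u : H := (‖x‖⁻¹ : ℂ) • x
  have hu : ‖u‖ = 1 := norm_smul_inv_norm hx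
  calc ‖⟪T x, x⟫‖ = ‖⟪T u, u⟫‖ * ‖x‖ ^ 2 := by
        simp only [u, map_smul, inner_smul_left, inner_smul_right, norm_mul, norm_conj,
          norm_inv, norm_real, norm_norm]
        field_simp
    _ ≤ nrad T * ‖x‖ ^ 2 := by
        gcongr
        exact le_ciSup (bddAbove_norm_inner_self T) (⟨u, hu⟩ : {x : H // ‖x‖ = 1})

omit [CompleteSpace H] in
lemma nrad_smul (c : ℂ) (A : H →L[ℂ] H) : nrad (c • A) = ‖c‖ * nrad A := by
  simp only [nrad, Real.mul_iSup_of_nonneg (norm_nonneg c), smul_apply, inner_smul_left,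
    norm_mul, norm_conj]

lemma inner_reP_apply_self (A : H →L[ℂ] H) (x : H) : ⟪reP A x, x⟫ = (⟪A x, x⟫.re : ℂ) := by
  rw [reP, smul_apply, add_apply, inner_smul_left, inner_add_left, adjoint_inner_left,
    ← inner_conj_symm x, add_conj, map_inv₀, map_ofNat]
  push_cast
  ring

lemma isSymmetric_reP (A : H →L[ℂ] H) : (reP A : H →ₗ[ℂ] H).IsSymmetric :=
  (LinearMap.isSymmetric_iff_inner_map_self_real _).2 fun x => by
    simp only [coe_coe, inner_reP_apply_self, conj_ofReal]

lemma norm_reP_le_nrad (A : H →L[ℂ] H) : ‖reP A‖ ≤ nrad A := by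
  rw [norm_eq_iSup_rayleighQuotient _ (isSymmetric_reP A)]
  refine ciSup_le fun x => ?_
  rw [rayleighQuotient, reApplyInnerSelf_apply, inner_reP_apply_self, RCLike.re_to_complex,
    ofReal_re, abs_div, abs_sq]
  exact div_le_of_le_mul₀ (sq_nonneg _) (Real.iSup_nonneg fun _ => norm_nonneg _)
    ((abs_re_le_norm _).trans (norm_inner_self_le_nrad_mul_sq A x))

lemma reP_smul (c : ℂ) (A : H →L[ℂ] H) :
    reP (c • A) = (c.re : ℂ) • reP A - (c.im : ℂ) • imP A := by
  simp only [reP, imP, ← star_eq_adjoint, star_smul, star_def]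
  rw [← re_add_im c, map_add, map_mul, conj_ofReal, conj_ofReal, conj_I]
  match_scalars <;> field_simp <;> ring_nf <;> simp
  ring

lemma sq_norm_reP_smul_le (c : ℂ) (A : H →L[ℂ] H) :
    ‖reP (c • A)‖ ^ 2 ≤ normSq c * nrad A ^ 2 := by
  rw [← Complex.sq_norm, ← mul_pow, ← nrad_smul]
  exact pow_le_pow_left₀ (norm_nonneg _) (norm_reP_le_nrad _) 2

lemma mul_self_reP_add_imP_add_mul_self_reP_sub_imP (A : H →L[ℂ] H) :
    (reP A + imP A) * (reP A + imP A) + (reP A - imP A) * (reP A - imP A)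
      = adjoint A * A + A * adjoint A := by
  simp only [reP, imP, smul_add, smul_sub, add_mul, mul_add, sub_mul, mul_sub,
    smul_mul_assoc, mul_smul_comm, smul_smul]
  match_scalars <;> field_simp <;> ring_nf <;> simp <;> norm_num

theorem stmt2 (A : H →L[ℂ] H) :
    (nrad A) ^ 2 ≥ (1/4) * ‖adjoint A * A + A * adjoint A‖
      + (1/4) * |‖reP A + imP A‖ ^ 2 - ‖reP A - imP A‖ ^ 2| := by
  have hB : ‖reP A + imP A‖ ^ 2 ≤ 2 * nrad A ^ 2 := by
    simpa [reP_smul, normSq_apply, sub_eq_add_neg, one_add_one_eq_two]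
      using sq_norm_reP_smul_le (1 - I) A
  have hC : ‖reP A - imP A‖ ^ 2 ≤ 2 * nrad A ^ 2 := by
    simpa [reP_smul, normSq_apply, one_add_one_eq_two] using sq_norm_reP_smul_le (1 + I) A
  have hK : ‖adjoint A * A + A * adjoint A‖ ≤ ‖reP A + imP A‖ ^ 2 + ‖reP A - imP A‖ ^ 2 := by
    rw [← mul_self_reP_add_imP_add_mul_self_reP_sub_imP, sq, sq]
    exact (norm_add_le _ _).trans (add_le_add (norm_mul_le _ _) (norm_mul_le _ _))
  have hdiff : |‖reP A + imP A‖ ^ 2 - ‖reP A - imP A‖ ^ 2|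
      ≤ 4 * nrad A ^ 2 - ‖adjoint A * A + A * adjoint A‖ :=
    abs_sub_le_iff.2 ⟨by linarith, by linarith⟩
  linarith
end

section
/- Let A be a bounded linear operator on a complex Hilbert space H and suppose w(A) = ‖A‖/2. Then ‖Re(A) + Im(A)‖ = ‖Re(A) − Im(A)‖. -/
/-!
`Re A ± Im A` are self-adjoint with quadratic forms `Re⟨Ax, x⟩ ∓ Im⟨Ax, x⟩`, of modulus at most
`√2 |⟨Ax, x⟩|`. As the norm of a self-adjoint operator is its numerical radius,
`‖Re A ± Im A‖ ≤ √2 w(A) = ‖A‖ / √2`. On the other hand `(1 - i) A = (Re A + Im A) - i (Re A - Im A)`,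
so `√2 ‖A‖ ≤ ‖Re A + Im A‖ + ‖Re A - Im A‖`, which forces both norms to equal `‖A‖ / √2`.
-/

open ContinuousLinearMap Complex

variable {H : Type*} [NormedAddCommGroup H] [InnerProductSpace ℂ H] [CompleteSpace H]

open scoped ComplexStarModule InnerProductSpace

theorem Complex.abs_re_add_im_le (z : ℂ) : |z.re + z.im| ≤ √2 * ‖z‖ := by
  rw [Complex.norm_def, ← Real.sqrt_mul zero_le_two]
  refine Real.abs_le_sqrt ?_
  rw [Complex.normSq_apply]
  nlinarith [sq_nonneg (z.re - z.im)]

theorem Complex.abs_re_sub_im_le (z : ℂ) : |z.re - z.im| ≤ √2 * ‖z‖ := by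
  simpa [sub_eq_add_neg] using abs_re_add_im_le (starRingEnd ℂ z)

theorem ContinuousLinearMap.norm_le_of_abs_re_inner_le {𝕜 E : Type*} [RCLike 𝕜]
    [NormedAddCommGroup E] [InnerProductSpace 𝕜 E] {T : E →L[𝕜] E} (hT : T.IsSymmetric)
    {C : ℝ} (hC : 0 ≤ C) (h : ∀ x, |RCLike.re ⟪T x, x⟫_𝕜| ≤ C * ‖x‖ ^ 2) : ‖T‖ ≤ C := by
  rw [T.norm_eq_iSup_rayleighQuotient hT]
  refine ciSup_le fun x => ?_
  rw [rayleighQuotient, abs_div, abs_sq]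
  exact div_le_of_le_mul₀ (by positivity) hC (h x)

theorem sqrt_two_mul_norm_le_norm_realPart_add_add_norm_sub {A : Type*}
    [SeminormedAddCommGroup A] [NormedSpace ℂ A] [StarAddMonoid A] [StarModule ℂ A] (a : A) :
    √2 * ‖a‖ ≤ ‖(ℜ a : A) + ℑ a‖ + ‖(ℜ a : A) - ℑ a‖ := by
  have hdecomp : (1 - I) • a = ((ℜ a : A) + ℑ a) - I • ((ℜ a : A) - ℑ a) := by
    conv_lhs => rw [← realPart_add_I_smul_imaginaryPart a]
    match_scalars
    · ring
    · linear_combination -I_sq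
  have hnorm : ‖(1 - I : ℂ)‖ = √2 := by
    rw [Complex.norm_def]
    norm_num [Complex.normSq_apply]
  calc √2 * ‖a‖ = ‖((ℜ a : A) + ℑ a) - I • ((ℜ a : A) - ℑ a)‖ := by
        rw [← hdecomp, norm_smul, hnorm]
    _ ≤ ‖(ℜ a : A) + ℑ a‖ + ‖(ℜ a : A) - ℑ a‖ := by
        grw [norm_sub_le, norm_smul, norm_I, one_mul]

section NumericalRadius

variable {E : Type*} [NormedAddCommGroup E] [InnerProductSpace ℂ E]

theorem nrad_nonneg (A : E →L[ℂ] E) : 0 ≤ nrad A :=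
  Real.iSup_nonneg fun _ => norm_nonneg _

theorem bddAbove_range_norm_inner_apply_self (A : E →L[ℂ] E) :
    BddAbove (Set.range fun x : {x : E // ‖x‖ = 1} => ‖⟪A x, x⟫_ℂ‖) := by
  refine ⟨‖A‖, ?_⟩
  rintro _ ⟨⟨x, hx⟩, rfl⟩
  show ‖⟪A x, x⟫_ℂ‖ ≤ ‖A‖
  grw [norm_inner_le_norm, le_opNorm, hx, mul_one, mul_one]

theorem norm_inner_apply_self_le_nrad_mul_sq (A : E →L[ℂ] E) (x : E) :
    ‖⟪A x, x⟫_ℂ‖ ≤ nrad A * ‖x‖ ^ 2 := by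
  rcases eq_or_ne x 0 with rfl | hx
  · simp
  have hx' : 0 < ‖x‖ := norm_pos_iff.mpr hx
  have hunit : ‖(‖x‖⁻¹ : ℂ) • x‖ = 1 := by
    rw [norm_smul, norm_inv, norm_real, norm_norm, inv_mul_cancel₀ hx'.ne']
  have hle := le_ciSup (bddAbove_range_norm_inner_apply_self A) ⟨_, hunit⟩
  simp only [map_smul, inner_smul_left, inner_smul_right, norm_mul, norm_conj, norm_inv,
    norm_real, norm_norm, ← mul_assoc, ← sq, inv_pow] at hle
  rwa [inv_mul_le_iff₀ (by positivity), mul_comm] at hle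

end NumericalRadius

section CartesianDecomposition

variable (A : H →L[ℂ] H) (x : H)

theorem reP_eq_realPart : reP A = ℜ A := by
  rw [realPart_apply_coe, reP, star_eq_adjoint, ← Complex.coe_smul]
  norm_num

theorem imP_eq_imaginaryPart : imP A = ℑ A := by
  rw [imaginaryPart_apply_coe, imP, star_eq_adjoint, ← Complex.coe_smul, smul_smul]
  congr 1
  rw [mul_inv, Complex.inv_I]
  push_cast
  ring

-- The inner product is conjugate-linear in its first argument, hence the minus sign.
theorem inner_apply_self_eq_realPart_sub_imaginaryPart :
    ⟪A x, x⟫_ℂ = ⟪(ℜ A : H →L[ℂ] H) x, x⟫_ℂ - I * ⟪(ℑ A : H →L[ℂ] H) x, x⟫_ℂ := by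
  conv_lhs => rw [← realPart_add_I_smul_imaginaryPart A]
  rw [add_apply, smul_apply, inner_add_left, inner_smul_left, conj_I, neg_mul, ← sub_eq_add_neg]

theorem re_inner_realPart_apply_self :
    (⟪(ℜ A : H →L[ℂ] H) x, x⟫_ℂ).re = (⟪A x, x⟫_ℂ).re := by
  have him : (⟪(ℑ A : H →L[ℂ] H) x, x⟫_ℂ).im = 0 := (ℑ A).2.isSymmetric.im_inner_apply_self x
  simp [inner_apply_self_eq_realPart_sub_imaginaryPart A x, him]

theorem re_inner_imaginaryPart_apply_self :
    (⟪(ℑ A : H →L[ℂ] H) x, x⟫_ℂ).re = -(⟪A x, x⟫_ℂ).im := by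
  have him : (⟪(ℜ A : H →L[ℂ] H) x, x⟫_ℂ).im = 0 := (ℜ A).2.isSymmetric.im_inner_apply_self x
  simp [inner_apply_self_eq_realPart_sub_imaginaryPart A x, him]

theorem norm_realPart_add_imaginaryPart_le : ‖(ℜ A : H →L[ℂ] H) + ℑ A‖ ≤ √2 * nrad A := by
  refine norm_le_of_abs_re_inner_le ((ℜ A).2.add (ℑ A).2).isSymmetric
    (by have := nrad_nonneg A; positivity) fun x => ?_
  rw [add_apply, inner_add_left, map_add, RCLike.re_to_complex, RCLike.re_to_complex,
    re_inner_realPart_apply_self, re_inner_imaginaryPart_apply_self, ← sub_eq_add_neg]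
  calc _ ≤ √2 * ‖⟪A x, x⟫_ℂ‖ := abs_re_sub_im_le _
    _ ≤ √2 * (nrad A * ‖x‖ ^ 2) := by grw [norm_inner_apply_self_le_nrad_mul_sq]
    _ = √2 * nrad A * ‖x‖ ^ 2 := by ring

theorem norm_realPart_sub_imaginaryPart_le : ‖(ℜ A : H →L[ℂ] H) - ℑ A‖ ≤ √2 * nrad A := by
  refine norm_le_of_abs_re_inner_le ((ℜ A).2.sub (ℑ A).2).isSymmetric
    (by have := nrad_nonneg A; positivity) fun x => ?_
  rw [sub_apply, inner_sub_left, map_sub, RCLike.re_to_complex, RCLike.re_to_complex,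
    re_inner_realPart_apply_self, re_inner_imaginaryPart_apply_self, sub_neg_eq_add]
  calc _ ≤ √2 * ‖⟪A x, x⟫_ℂ‖ := abs_re_add_im_le _
    _ ≤ √2 * (nrad A * ‖x‖ ^ 2) := by grw [norm_inner_apply_self_le_nrad_mul_sq]
    _ = √2 * nrad A * ‖x‖ ^ 2 := by ring

end CartesianDecomposition

theorem stmt3 (A : H →L[ℂ] H) (h : nrad A = ‖A‖ / 2) :
    ‖reP A + imP A‖ = ‖reP A - imP A‖ := by
  have hadd := norm_realPart_add_imaginaryPart_le A
  have hsub := norm_realPart_sub_imaginaryPart_le A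
  have hlower := sqrt_two_mul_norm_le_norm_realPart_add_add_norm_sub A
  rw [h] at hadd hsub
  rw [reP_eq_realPart, imP_eq_imaginaryPart]
  linarith
end

section
/- Let A and B be bounded linear operators on a complex Hilbert space H and let r ≥ 1. Then w(B*A)^{2r} ≤ (1/2) · ( ‖ |B|²|A|² + |A|²|B|² ‖ / 2 )^r + (1/4) ‖ |B|^{4r} + |A|^{4r} ‖. -/
open ContinuousLinearMap Complex

variable {H : Type*} [NormedAddCommGroup H] [InnerProductSpace ℂ H] [CompleteSpace H]

/-! For a unit vector `x`, put `P = A* A` and `Q = B* B`. Cauchy–Schwarz gives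
`|⟪B* A x, x⟫|² ≤ ⟪P x, x⟫ ⟪x, Q x⟫`, and Buzano's inequality bounds this by
`(Re ⟪P x, Q x⟫ + ‖P x‖ ‖Q x‖) / 2`, where `2 Re ⟪P x, Q x⟫ = ⟪(Q P + P Q) x, x⟫ ≤ ‖Q P + P Q‖`.
After raising to the power `r` with the convexity of `t ↦ t ^ r`, McCarthy's inequality
`⟪T x, x⟫ ^ r ≤ ⟪T ^ r x, x⟫` for `T = P²` turns `‖P x‖ ^ (2 r)` into `⟪|A| ^ (4 r) x, x⟫`.
-/

open scoped InnerProductSpace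

lemma rpow_tangent_line_le {s : ℝ} (hs : 1 ≤ s) {c t : ℝ} (hc : 0 ≤ c) (ht : 0 ≤ t) :
    c ^ s + s * c ^ (s - 1) * (t - c) ≤ t ^ s := by
  rcases hc.eq_or_lt with rfl | hc
  · rcases hs.eq_or_lt with rfl | hs
    · simp
    · simpa [Real.zero_rpow (by linarith : s ≠ 0), Real.zero_rpow (by linarith : s - 1 ≠ 0)]
        using Real.rpow_nonneg ht s
  · have bernoulli := one_add_mul_self_le_rpow_one_add
      (show -1 ≤ t / c - 1 by linarith [div_nonneg ht hc.le]) hs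
    rw [add_sub_cancel, Real.div_rpow ht hc.le, le_div_iff₀ (by positivity)] at bernoulli
    calc c ^ s + s * c ^ (s - 1) * (t - c) = (1 + s * (t / c - 1)) * c ^ s := by
          rw [Real.rpow_sub_one hc.ne']
          field_simp
      _ ≤ t ^ s := bernoulli

lemma add_div_two_rpow_le {c d r : ℝ} (hc : 0 ≤ c) (hd : 0 ≤ d) (hr : 1 ≤ r) :
    ((c + d) / 2) ^ r ≤ (c ^ r + d ^ r) / 2 := by
  have h := (convexOn_rpow hr).2 (Set.mem_Ici.mpr hc) (Set.mem_Ici.mpr hd)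
    (by norm_num : (0 : ℝ) ≤ 1 / 2) (by norm_num : (0 : ℝ) ≤ 1 / 2) (by norm_num)
  simp only [smul_eq_mul] at h
  calc ((c + d) / 2) ^ r = (1 / 2 * c + 1 / 2 * d) ^ r := by ring_nf
    _ ≤ 1 / 2 * c ^ r + 1 / 2 * d ^ r := h
    _ = (c ^ r + d ^ r) / 2 := by ring

/-- Buzano's inequality; the point is that `w = 2 ⟪x, v⟫ x - v` has the same norm as `v`. -/
lemma two_mul_re_inner_mul_inner_le {𝕜 E : Type*} [RCLike 𝕜] [NormedAddCommGroup E]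
    [InnerProductSpace 𝕜 E] {x : E} (hx : ‖x‖ = 1) (u v : E) :
    2 * RCLike.re (⟪u, x⟫_𝕜 * ⟪x, v⟫_𝕜) ≤ RCLike.re ⟪u, v⟫_𝕜 + ‖u‖ * ‖v‖ := by
  set w : E := (2 * ⟪x, v⟫_𝕜) • x - v
  have hw : ‖w‖ = ‖v‖ := by
    have : ‖w‖ ^ 2 = ‖v‖ ^ 2 := by
      rw [norm_sub_sq (𝕜 := 𝕜), norm_smul, inner_smul_left, hx, map_mul (starRingEnd 𝕜), mul_assoc,
        RCLike.conj_mul]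
      simp only [norm_mul, RCLike.norm_ofNat, mul_one, RCLike.mul_re, RCLike.conj_re,
        RCLike.ofNat_re, RCLike.re_ofReal_pow, RCLike.conj_im, RCLike.ofNat_im, neg_zero,
        RCLike.im_ofReal_pow, mul_zero, sub_zero]
      ring
    exact (pow_left_inj₀ (norm_nonneg _) (norm_nonneg _) two_ne_zero).1 this
  have hcs := re_inner_le_norm (𝕜 := 𝕜) u w
  rw [hw, inner_sub_right, inner_smul_right, map_sub] at hcs
  linarith [show RCLike.re (2 * ⟪x, v⟫_𝕜 * ⟪u, x⟫_𝕜) = 2 * RCLike.re (⟪u, x⟫_𝕜 * ⟪x, v⟫_𝕜) by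
    rw [mul_assoc, mul_comm (⟪x, v⟫_𝕜)]; simp]

lemma re_inner_apply_self_le_opNorm {𝕜 E : Type*} [RCLike 𝕜] [NormedAddCommGroup E]
    [InnerProductSpace 𝕜 E] (T : E →L[𝕜] E) {x : E} (hx : ‖x‖ = 1) :
    RCLike.re ⟪T x, x⟫_𝕜 ≤ ‖T‖ :=
  calc RCLike.re ⟪T x, x⟫_𝕜 ≤ ‖T x‖ * ‖x‖ := re_inner_le_norm _ _
    _ ≤ ‖T‖ * ‖x‖ * ‖x‖ := by gcongr; exact T.le_opNorm x
    _ = ‖T‖ := by rw [hx, mul_one, mul_one]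

lemma re_inner_le_re_inner_of_le {𝕜 E : Type*} [RCLike 𝕜] [NormedAddCommGroup E]
    [InnerProductSpace 𝕜 E] {S T : E →L[𝕜] E} (h : S ≤ T) (x : E) :
    RCLike.re ⟪S x, x⟫_𝕜 ≤ RCLike.re ⟪T x, x⟫_𝕜 := by
  simpa [inner_sub_left] using ((le_def S T).1 h).re_inner_nonneg_left x

lemma nrad_rpow_le {E : Type*} [NormedAddCommGroup E] [InnerProductSpace ℂ E] {T : E →L[ℂ] E}
    {p M : ℝ} (hp : 0 < p) (hM : 0 ≤ M)
    (h : ∀ x : E, ‖x‖ = 1 → ‖⟪T x, x⟫_ℂ‖ ^ p ≤ M) : nrad T ^ p ≤ M := by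
  have hnrad : nrad T ≤ M ^ p⁻¹ :=
    Real.iSup_le (fun x => (Real.le_rpow_inv_iff_of_pos (norm_nonneg _) hM hp).2 (h x x.2))
      (Real.rpow_nonneg hM _)
  exact (Real.le_rpow_inv_iff_of_pos (Real.iSup_nonneg fun _ => norm_nonneg _) hM hp).1 hnrad

/-- McCarthy's inequality, from the tangent line of `t ↦ t ^ s` at `⟪P x, x⟫`. -/
lemma rpow_re_inner_le_re_inner_cfc_rpow {P : H →L[ℂ] H} (hP : 0 ≤ P) {x : H} (hx : ‖x‖ = 1)
    {s : ℝ} (hs : 1 ≤ s) :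
    (re ⟪P x, x⟫_ℂ) ^ s ≤ re ⟪cfc (· ^ s : ℝ → ℝ) P x, x⟫_ℂ := by
  set c := re ⟪P x, x⟫_ℂ
  have hc : 0 ≤ c := ((nonneg_iff_isPositive P).1 hP).re_inner_nonneg_left x
  set β := s * c ^ (s - 1)
  have tangent : cfc (fun t : ℝ => (c ^ s - β * c) + β * t) P ≤ cfc (· ^ s : ℝ → ℝ) P :=
    cfc_mono (fun t ht => by
      linarith [rpow_tangent_line_le hs hc (spectrum_nonneg_of_nonneg hP ht)])
      (hg := (Real.continuous_rpow_const (by linarith)).continuousOn)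
  rw [cfc_const_add (c ^ s - β * c) (β * ·) P, cfc_const_mul_id β P] at tangent
  calc c ^ s = re ⟪(algebraMap ℝ _ (c ^ s - β * c) + β • P) x, x⟫_ℂ := by
        simp [Algebra.algebraMap_eq_smul_one, inner_smul_left_eq_smul, inner_self_eq_norm_sq_to_K,
          hx, c]
    _ ≤ _ := re_inner_le_re_inner_of_le tangent x

lemma opow_oabs_four_mul (A : H →L[ℂ] H) {r : ℝ} (hr : 0 ≤ r) :
    opow (oabs A) (4 * r) = cfc (· ^ r : ℝ → ℝ) (adjoint A * A * (adjoint A * A)) := by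
  have hP : 0 ≤ adjoint A * A := star_mul_self_nonneg A
  rw [opow, oabs, ← cfc_comp' (· ^ (4 * r)) Real.sqrt _
      (Real.continuous_rpow_const (by linarith)).continuousOn,
    ← sq, ← cfc_comp_pow (· ^ r) 2 _ (Real.continuous_rpow_const hr).continuousOn]
  refine cfc_congr fun t ht => ?_
  have ht : 0 ≤ t := spectrum_nonneg_of_nonneg hP ht
  rw [Real.sqrt_eq_rpow, ← Real.rpow_mul ht, ← Real.rpow_natCast, ← Real.rpow_mul ht]
  congr 1
  push_cast
  ring

lemma rpow_sq_norm_adjoint_mul_self_apply_le (A : H →L[ℂ] H) {x : H} (hx : ‖x‖ = 1) {r : ℝ}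
    (hr : 1 ≤ r) :
    (‖(adjoint A * A) x‖ ^ 2) ^ r ≤ re ⟪opow (oabs A) (4 * r) x, x⟫_ℂ := by
  have hP : IsSelfAdjoint (adjoint A * A) := IsSelfAdjoint.star_mul_self A
  have hPP : 0 ≤ adjoint A * A * (adjoint A * A) := by
    simpa [hP.star_eq] using star_mul_self_nonneg (adjoint A * A)
  rw [opow_oabs_four_mul A (by linarith), apply_norm_sq_eq_inner_adjoint_left, hP.adjoint_eq]
  exact rpow_re_inner_le_re_inner_cfc_rpow hPP hx hr

lemma sq_norm_inner_adjoint_mul_apply_le (A B : H →L[ℂ] H) {x : H} (hx : ‖x‖ = 1) :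
    ‖⟪(adjoint B * A) x, x⟫_ℂ‖ ^ 2 ≤
      (‖adjoint B * B * (adjoint A * A) + adjoint A * A * (adjoint B * B)‖ / 2
        + ‖(adjoint A * A) x‖ * ‖(adjoint B * B) x‖) / 2 := by
  set P := adjoint A * A
  set Q := adjoint B * B
  have hP : IsSelfAdjoint P := IsSelfAdjoint.star_mul_self A
  have hQ : IsSelfAdjoint Q := IsSelfAdjoint.star_mul_self B
  have cauchy_schwarz : ‖⟪(adjoint B * A) x, x⟫_ℂ‖ ≤ ‖A x‖ * ‖B x‖ := by
    rw [mul_apply_eq_comp (adjoint B) A, adjoint_inner_left]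
    exact norm_inner_le_norm _ _
  have hPx : ⟪P x, x⟫_ℂ = (‖A x‖ ^ 2 : ℝ) := by
    rw [mul_apply_eq_comp (adjoint A) A, adjoint_inner_left, inner_self_eq_norm_sq_to_K]; norm_cast
  have hQx : ⟪x, Q x⟫_ℂ = (‖B x‖ ^ 2 : ℝ) := by
    rw [mul_apply_eq_comp (adjoint B) B, adjoint_inner_right, inner_self_eq_norm_sq_to_K]; norm_cast
  have buzano := two_mul_re_inner_mul_inner_le (𝕜 := ℂ) hx (P x) (Q x)
  rw [hPx, hQx, ← ofReal_mul, RCLike.re_to_complex, ofReal_re] at buzano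
  have symmetrized : 2 * RCLike.re ⟪P x, Q x⟫_ℂ = RCLike.re ⟪(Q * P + P * Q) x, x⟫_ℂ := by
    rw [add_apply, inner_add_left, map_add, mul_apply_eq_comp Q P, mul_apply_eq_comp P Q,
      ← adjoint_inner_right Q (P x) x, ← adjoint_inner_right P (Q x) x, hQ.adjoint_eq,
      hP.adjoint_eq, inner_re_symm (𝕜 := ℂ) (Q x)]
    ring
  have hsq : ‖⟪(adjoint B * A) x, x⟫_ℂ‖ ^ 2 ≤ ‖A x‖ ^ 2 * ‖B x‖ ^ 2 := by
    rw [← mul_pow]; exact pow_le_pow_left₀ (norm_nonneg _) cauchy_schwarz 2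
  have hsymm_le := re_inner_apply_self_le_opNorm (Q * P + P * Q) hx
  linarith

theorem stmt13 (A B : H →L[ℂ] H) (r : ℝ) (hr : 1 ≤ r) :
    (nrad (adjoint B * A)) ^ (2 * r)
      ≤ (1/2) * (‖(adjoint B * B) * (adjoint A * A) + (adjoint A * A) * (adjoint B * B)‖ / 2) ^ r
        + (1/4) * ‖opow (oabs B) (4 * r) + opow (oabs A) (4 * r)‖ := by
  set N := ‖(adjoint B * B) * (adjoint A * A) + (adjoint A * A) * (adjoint B * B)‖
  set SA := opow (oabs A) (4 * r)
  set SB := opow (oabs B) (4 * r)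
  refine nrad_rpow_le (by positivity) (by positivity) fun x hx => ?_
  set a := ‖(adjoint A * A) x‖
  set b := ‖(adjoint B * B) x‖
  calc ‖⟪(adjoint B * A) x, x⟫_ℂ‖ ^ (2 * r) = (‖⟪(adjoint B * A) x, x⟫_ℂ‖ ^ 2) ^ r := by
        rw [Real.rpow_mul (norm_nonneg _), Real.rpow_two]
    _ ≤ ((N / 2 + a * b) / 2) ^ r := by
        gcongr; exact sq_norm_inner_adjoint_mul_apply_le A B hx
    _ ≤ ((N / 2) ^ r + (a * b) ^ r) / 2 := add_div_two_rpow_le (by positivity) (by positivity) hr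
    _ ≤ ((N / 2) ^ r + ((b ^ 2) ^ r + (a ^ 2) ^ r) / 2) / 2 := by
        gcongr
        calc (a * b) ^ r ≤ ((b ^ 2 + a ^ 2) / 2) ^ r := by
              gcongr; nlinarith [sq_nonneg (a - b)]
          _ ≤ _ := add_div_two_rpow_le (by positivity) (by positivity) hr
    _ ≤ ((N / 2) ^ r + (re ⟪SB x, x⟫_ℂ + re ⟪SA x, x⟫_ℂ) / 2) / 2 := by
        gcongr
        · exact rpow_sq_norm_adjoint_mul_self_apply_le B hx hr
        · exact rpow_sq_norm_adjoint_mul_self_apply_le A hx hr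
    _ ≤ ((N / 2) ^ r + ‖SB + SA‖ / 2) / 2 := by
        gcongr
        simpa [inner_add_left] using re_inner_apply_self_le_opNorm (SB + SA) hx
    _ = _ := by ring
end
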